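/- Let F: ℝ → ℂ^{m×m} be a continuous 2π-periodic matrix-valued function and let T_n(F) be the nm×nm block Toeplitz matrix whose (i,j) block is the matrix Fourier coefficient (1/2π)∫_0^{2π} e^{−i(i−j)ω} F(ω) dω. Then σ_1(T_n(F)) ≤ sup_{ω ∈ [0,2π]} σ_1(F(ω)). -/

import Mathlib

open scoped BigOperators

/-- Euclidean norm of a complex vector. -/
noncomputable def vnorm {ι : Type*} [Fintype ι] (v : ι → ℂ) : ℝ :=
  Real.sqrt (∑ i, ‖v i‖ ^ 2)

/-- Largest singular value (ℓ²→ℓ² operator norm) of a complex matrix. -/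
noncomputable def sval1 {ι κ : Type*} [Fintype ι] [Fintype κ] (A : Matrix ι κ ℂ) : ℝ :=
  ⨆ v : {v : κ → ℂ // vnorm v ≤ 1}, vnorm (A.mulVec v.1)

/-- The `nm × nm` block Toeplitz matrix generated by a matrix-valued function `F`:
    block `(i,j)` is the matrix Fourier coefficient `(1/2π)∫₀^{2π} e^{−i(i−j)ω} F(ω) dω`. -/
noncomputable def blockToep (n m : ℕ) (F : ℝ → Matrix (Fin m) (Fin m) ℂ) :
    Matrix (Fin n × Fin m) (Fin n × Fin m) ℂ :=
  Matrix.of fun p q => (2 * (Real.pi : ℂ))⁻¹ *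
    ∫ ω in (0:ℝ)..(2 * Real.pi),
      Complex.exp (-Complex.I * (((p.1 : ℤ) - (q.1 : ℤ) : ℤ) : ℂ) * (ω : ℂ)) * F ω p.2 q.2

/-!
Identify `v ∈ ℂ^{nm}` with the vector trigonometric polynomial `V(ω) = ∑ₖ vₖ e^{ikω}`
(`blockTrigPoly v`). The `(k, j)` entry of `T_n(F) v` is the `k`-th Fourier coefficient of the
`j`-th component of `F(ω) V(ω)`. Hence, with `M = sup_ω σ₁(F(ω))`, Bessel's inequality, the
pointwise bound `‖F(ω) V(ω)‖ ≤ M ‖V(ω)‖` and Parseval's identity for `V` give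
`‖T_n(F) v‖² ≤ (1/2π) ∫ ‖F V‖² ≤ M² (1/2π) ∫ ‖V‖² = M² ‖v‖²`.
-/

open Real MeasureTheory
open scoped Matrix Matrix.Norms.L2Operator

section L2OpNorm

variable {ι κ : Type*} [Fintype ι] [Fintype κ]

lemma vnorm_eq_norm_toLp (v : ι → ℂ) : vnorm v = ‖(WithLp.toLp 2 v : EuclideanSpace ℂ ι)‖ := by
  rw [EuclideanSpace.norm_eq]
  rfl

variable [DecidableEq κ]

lemma sval1_eq_l2_opNorm (A : Matrix ι κ ℂ) : sval1 A = ‖A‖ := by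
  rw [Matrix.l2_opNorm_def, ← ContinuousLinearMap.sSup_unitClosedBall_eq_norm, sval1, iSup]
  congr 1
  ext r
  simp only [Set.mem_range, Set.mem_image, Metric.mem_closedBall, dist_zero_right]
  constructor
  · rintro ⟨⟨v, hv⟩, rfl⟩
    exact ⟨WithLp.toLp 2 v, by rwa [← vnorm_eq_norm_toLp], by rw [vnorm_eq_norm_toLp]; rfl⟩
  · rintro ⟨x, hx, rfl⟩
    exact ⟨⟨x.ofLp, by rwa [vnorm_eq_norm_toLp]⟩, by rw [vnorm_eq_norm_toLp]; rfl⟩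

namespace Matrix

variable {𝕜 : Type*} [RCLike 𝕜]

lemma sum_norm_sq_mulVec_le (A : Matrix ι κ 𝕜) (x : κ → 𝕜) :
    ∑ i, ‖(A *ᵥ x) i‖ ^ 2 ≤ ‖A‖ ^ 2 * ∑ j, ‖x j‖ ^ 2 := by
  have h := pow_le_pow_left₀ (norm_nonneg _) (A.l2_opNorm_mulVec (WithLp.toLp 2 x)) 2
  rwa [mul_pow, EuclideanSpace.norm_sq_eq, EuclideanSpace.norm_sq_eq] at h

lemma l2_opNorm_le_of_sum_norm_sq_le (A : Matrix ι κ 𝕜) {M : ℝ} (hM : 0 ≤ M)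
    (h : ∀ x, ∑ i, ‖(A *ᵥ x) i‖ ^ 2 ≤ M ^ 2 * ∑ j, ‖x j‖ ^ 2) : ‖A‖ ≤ M := by
  rw [l2_opNorm_def]
  refine ContinuousLinearMap.opNorm_le_bound _ hM fun x => ?_
  rw [← pow_le_pow_iff_left₀ (norm_nonneg _) (by positivity) two_ne_zero, mul_pow,
    EuclideanSpace.norm_sq_eq, EuclideanSpace.norm_sq_eq]
  exact h x.ofLp

end Matrix

end L2OpNorm

lemma continuous_fourier_coe (T : ℝ) (k : ℤ) :
    Continuous fun x : ℝ => fourier k (x : AddCircle T) :=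
  (fourier k).continuous.comp (AddCircle.continuous_mk' T)

lemma Continuous.memLp_two_restrict_Ioc {E : Type*} [NormedAddCommGroup E] {g : ℝ → E}
    (hg : Continuous g) (a b : ℝ) : MemLp g 2 (volume.restrict (Set.Ioc a b)) :=
  (memLp_two_iff_integrable_sq_norm hg.aestronglyMeasurable).2
    ((hg.norm.pow 2).intervalIntegrable a b).1

section FourierOnInterval

variable {a b : ℝ}

lemma fourierCoeffOn_fourier (hab : a < b) (l k : ℤ) :
    fourierCoeffOn hab (fun x => fourier l (x : AddCircle (b - a))) k =
      if k = l then 1 else 0 := by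
  have := Fact.mk (sub_pos.2 hab)
  have hlift : AddCircle.liftIoc (b - a) a (fun x => fourier l (x : AddCircle (b - a))) =
      fourier l := by
    ext y
    exact congrArg (fourier l) AddCircle.coe_equivIoc
  rw [fourierCoeffOn, hlift, fourierCoeff_fourier, Pi.single_apply]

lemma fourierCoeffOn_fourier_mul (hab : a < b) (f : ℝ → ℂ) (l k : ℤ) :
    fourierCoeffOn hab (fun x => fourier l (x : AddCircle (b - a)) * f x) k =
      fourierCoeffOn hab f (k - l) := by
  simp only [fourierCoeffOn_eq_integral, smul_eq_mul, ← mul_assoc, ← fourier_add]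
  ring_nf

lemma fourierCoeffOn_finsetSum (hab : a < b) {ι : Type*} (s : Finset ι) {f : ι → ℝ → ℂ}
    (hf : ∀ i ∈ s, IntervalIntegrable (f i) volume a b) (k : ℤ) :
    fourierCoeffOn hab (fun x => ∑ i ∈ s, f i x) k = ∑ i ∈ s, fourierCoeffOn hab (f i) k := by
  simp only [fourierCoeffOn_eq_integral, smul_eq_mul, Finset.mul_sum]
  rw [intervalIntegral.integral_finsetSum, Finset.smul_sum]
  exact fun i hi => (hf i hi).continuousOn_mul (continuous_fourier_coe _ _).continuousOn

lemma sum_sq_fourierCoeffOn_le (hab : a < b) {ι : Type*} [Fintype ι] (κ : ι ↪ ℤ) {g : ℝ → ℂ}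
    (hg : MemLp g 2 (volume.restrict (Set.Ioc a b))) :
    ∑ i, ‖fourierCoeffOn hab g (κ i)‖ ^ 2 ≤ (b - a)⁻¹ * ∫ x in a..b, ‖g x‖ ^ 2 := by
  rw [← Finset.sum_map _ κ (fun k => ‖fourierCoeffOn hab g k‖ ^ 2)]
  exact sum_le_hasSum _ (fun _ _ => by positivity) (hasSum_sq_fourierCoeffOn hab hg)

lemma integral_norm_sq_sum_fourier (hab : a < b) {ι : Type*} [Fintype ι] (κ : ι ↪ ℤ)
    (c : ι → ℂ) :
    (b - a)⁻¹ * ∫ x in a..b, ‖∑ i, c i * fourier (κ i) (x : AddCircle (b - a))‖ ^ 2 =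
      ∑ i, ‖c i‖ ^ 2 := by
  set P : ℝ → ℂ := fun x => ∑ i, c i * fourier (κ i) (x : AddCircle (b - a))
  have hterm (i : ι) : Continuous fun x : ℝ => c i * fourier (κ i) (x : AddCircle (b - a)) :=
    continuous_const.mul (continuous_fourier_coe _ _)
  have hcoeff (k : ℤ) : fourierCoeffOn hab P k = ∑ i, if k = κ i then c i else 0 := by
    rw [fourierCoeffOn_finsetSum hab _ fun i _ => (hterm i).intervalIntegrable a b]
    simp only [fourierCoeffOn.const_mul, fourierCoeffOn_fourier hab, mul_ite, mul_one, mul_zero]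
  have hsum : HasSum (fun k => ‖fourierCoeffOn hab P k‖ ^ 2) (∑ i, ‖c i‖ ^ 2) := by
    rw [← κ.injective.hasSum_iff]
    · convert hasSum_fintype _ with i
      rw [Function.comp_apply, hcoeff, Finset.sum_eq_single_of_mem i (Finset.mem_univ i)
        fun j _ hji => if_neg fun h => hji (κ.injective h).symm, if_pos rfl]
    · intro k hk
      rw [hcoeff, Finset.sum_eq_zero fun i _ => if_neg fun (h : k = κ i) => hk ⟨i, h.symm⟩,
        norm_zero, zero_pow two_ne_zero]
  exact (hasSum_sq_fourierCoeffOn hab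
    ((continuous_finsetSum _ fun i _ => hterm i).memLp_two_restrict_Ioc a b)).unique hsum

end FourierOnInterval

lemma blockToep_apply (n m : ℕ) (F : ℝ → Matrix (Fin m) (Fin m) ℂ) (p q : Fin n × Fin m) :
    blockToep n m F p q = fourierCoeffOn two_pi_pos (fun ω => F ω p.2 q.2) (p.1 - q.1) := by
  rw [fourierCoeffOn_eq_integral, blockToep, Matrix.of_apply, sub_zero, one_div,
    ← intervalIntegral.integral_smul, ← intervalIntegral.integral_const_mul]
  refine intervalIntegral.integral_congr fun ω _ => ?_
  have hπ : (π : ℂ) ≠ 0 := Complex.ofReal_ne_zero.2 pi_ne_zero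
  rw [fourier_coe_apply, Complex.real_smul, smul_eq_mul]
  push_cast
  field_simp

noncomputable def blockTrigPoly {n m : ℕ} (v : Fin n × Fin m → ℂ) (ω : ℝ) : Fin m → ℂ :=
  fun j => ∑ k : Fin n, v (k, j) * fourier (k : ℤ) (ω : AddCircle (2 * π))

lemma continuous_blockTrigPoly {n m : ℕ} (v : Fin n × Fin m → ℂ) (j : Fin m) :
    Continuous fun ω => blockTrigPoly v ω j :=
  continuous_finsetSum _ fun _ _ => continuous_const.mul (continuous_fourier_coe _ _)

lemma blockToep_mulVec {n m : ℕ} {F : ℝ → Matrix (Fin m) (Fin m) ℂ} (hF : Continuous F)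
    (v : Fin n × Fin m → ℂ) (k : Fin n) (j : Fin m) :
    (blockToep n m F *ᵥ v) (k, j) =
      fourierCoeffOn two_pi_pos (fun ω => (F ω *ᵥ blockTrigPoly v ω) j) k := by
  have hshift (q : Fin n × Fin m) : blockToep n m F (k, j) q * v q = fourierCoeffOn two_pi_pos
      (fun ω => v q * (fourier (q.1 : ℤ) (ω : AddCircle (2 * π)) * F ω j q.2)) k := by
    have := fourierCoeffOn_fourier_mul two_pi_pos (fun ω => F ω j q.2) q.1 k
    rw [sub_zero] at this
    rw [fourierCoeffOn.const_mul, this, blockToep_apply, mul_comm]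
  simp only [Matrix.mulVec, dotProduct, hshift]
  rw [← fourierCoeffOn_finsetSum _ _
    (f := fun q ω => v q * (fourier (q.1 : ℤ) (ω : AddCircle (2 * π)) * F ω j q.2)) fun q _ =>
      (continuous_const.mul ((continuous_fourier_coe _ _).mul
        (hF.matrix_elem j q.2))).intervalIntegrable _ _]
  congr 1
  ext ω
  simp only [blockTrigPoly, Fintype.sum_prod_type, Finset.mul_sum]
  rw [Finset.sum_comm]
  exact Finset.sum_congr rfl fun i _ => Finset.sum_congr rfl fun l _ => by ring

lemma sum_norm_sq_blockToep_mulVec_le {n m : ℕ} {F : ℝ → Matrix (Fin m) (Fin m) ℂ}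
    (hF : Continuous F) {M : ℝ} (hM : ∀ ω ∈ Set.Icc 0 (2 * π), ‖F ω‖ ≤ M)
    (v : Fin n × Fin m → ℂ) :
    ∑ p, ‖(blockToep n m F *ᵥ v) p‖ ^ 2 ≤ M ^ 2 * ∑ p, ‖v p‖ ^ 2 := by
  set κ : Fin n ↪ ℤ := Fin.valEmbedding.trans Nat.castEmbedding
  set G : ℝ → Fin m → ℂ := fun ω => F ω *ᵥ blockTrigPoly v ω
  have hG (j : Fin m) : Continuous fun ω => G ω j :=
    (continuous_apply j).comp (hF.matrix_mulVec (continuous_pi (continuous_blockTrigPoly v)))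
  have hparseval (j : Fin m) :
      (2 * π)⁻¹ * ∫ ω in 0..2 * π, ‖blockTrigPoly v ω j‖ ^ 2 = ∑ k, ‖v (k, j)‖ ^ 2 := by
    have := integral_norm_sq_sum_fourier two_pi_pos κ fun k => v (k, j)
    rwa [sub_zero] at this
  calc ∑ p, ‖(blockToep n m F *ᵥ v) p‖ ^ 2
      = ∑ j, ∑ k, ‖fourierCoeffOn two_pi_pos (fun ω => G ω j) (κ k)‖ ^ 2 := by
        rw [Fintype.sum_prod_type, Finset.sum_comm]
        simp [κ, G, blockToep_mulVec hF]
    _ ≤ ∑ j, (2 * π)⁻¹ * ∫ ω in 0..2 * π, ‖G ω j‖ ^ 2 := by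
        gcongr with j
        simpa only [sub_zero] using
          sum_sq_fourierCoeffOn_le two_pi_pos κ ((hG j).memLp_two_restrict_Ioc _ _)
    _ = (2 * π)⁻¹ * ∫ ω in 0..2 * π, ∑ j, ‖G ω j‖ ^ 2 := by
        rw [← Finset.mul_sum, intervalIntegral.integral_finsetSum (f := fun j ω => ‖G ω j‖ ^ 2)
          fun j _ => ((hG j).norm.pow 2).intervalIntegrable _ _]
    _ ≤ (2 * π)⁻¹ * ∫ ω in 0..2 * π, M ^ 2 * ∑ j, ‖blockTrigPoly v ω j‖ ^ 2 := by
        gcongr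
        refine intervalIntegral.integral_mono_on two_pi_pos.le ?_ ?_ fun ω hω => ?_
        · exact (continuous_finsetSum _ fun j _ => ((hG j).norm.pow 2)).intervalIntegrable _ _
        · exact (continuous_const.mul (continuous_finsetSum _ fun j _ =>
            ((continuous_blockTrigPoly v j).norm.pow 2))).intervalIntegrable _ _
        · exact (Matrix.sum_norm_sq_mulVec_le _ _).trans (by gcongr; exact hM ω hω)
    _ = M ^ 2 * ∑ j, ∑ k, ‖v (k, j)‖ ^ 2 := by
        rw [intervalIntegral.integral_const_mul, intervalIntegral.integral_finsetSum
          (f := fun j ω => ‖blockTrigPoly v ω j‖ ^ 2) fun j _ =>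
            ((continuous_blockTrigPoly v j).norm.pow 2).intervalIntegrable _ _]
        simp only [← hparseval, Finset.mul_sum]
        exact Finset.sum_congr rfl fun _ _ => by ring
    _ = M ^ 2 * ∑ p, ‖v p‖ ^ 2 := by rw [Fintype.sum_prod_type, Finset.sum_comm]

theorem block_toeplitz_sval_bound_general (n m : ℕ) (F : ℝ → Matrix (Fin m) (Fin m) ℂ)
    (hF : Continuous F) :
    sval1 (blockToep n m F) ≤ ⨆ ω : Set.Icc (0 : ℝ) (2 * Real.pi), sval1 (F ω) := by
  simp only [sval1_eq_l2_opNorm]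
  have hbdd : BddAbove (Set.range fun ω : Set.Icc (0 : ℝ) (2 * π) => ‖F ω‖) :=
    (isCompact_range (hF.comp continuous_subtype_val).norm).bddAbove
  have hM (ω : ℝ) (hω : ω ∈ Set.Icc 0 (2 * π)) :
      ‖F ω‖ ≤ ⨆ ω : Set.Icc (0 : ℝ) (2 * π), ‖F ω‖ :=
    le_ciSup hbdd ⟨ω, hω⟩
  exact (blockToep n m F).l2_opNorm_le_of_sum_norm_sq_le
    ((norm_nonneg _).trans (hM 0 ⟨le_rfl, two_pi_pos.le⟩))
    (sum_norm_sq_blockToep_mulVec_le hF hM)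

/-- Bound on the largest singular value of a block Toeplitz matrix in terms of its
    matrix-valued generating function: `σ₁(T_n(F)) ≤ sup_{ω ∈ [0,2π]} σ₁(F(ω))`. -/
theorem block_toeplitz_sval_bound (n m : ℕ) (F : ℝ → Matrix (Fin m) (Fin m) ℂ)
    (hF : Continuous F) (hper : Function.Periodic F (2 * Real.pi)) :
    sval1 (blockToep n m F) ≤ ⨆ ω : Set.Icc (0 : ℝ) (2 * Real.pi), sval1 (F ω) :=
  block_toeplitz_sval_bound_general n m F hF
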